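/- Let m, d, σ, ρ, γ, τ > 0 with d > ρ and 0 < ε < 1. Then (ξ₁+η₁)(ξ₂+η₂) − (ξ₀+η₀)(ξ₃+η₃) = (d−ρ)(m+dσ)(2−ε)² + (m+dσ)²τ(2−ε)(1−ε) + γdσ²(2−ε) + [γσ + (m+dσ)τ(1−ε)]·mστ(1−ε), where ξ₀ = γ − (d−ρ)τε, ξ₁ = (d−ρ)(1−ε) + γσ − (m+dσ)τε, ξ₂ = (m+dσ)(1−ε) − mστε, ξ₃ = mσ(1−ε), η₀ = (d−ρ)τ, η₁ = (d−ρ) + (m+dσ)τ, η₂ = m + dσ + mστ, η₃ = mσ. Consequently the left-hand side is nonnegative. -/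

import Mathlib

/-!
With `s = 2 - ε` and `t = τ (1 - ε)` the four sums collapse to
`ξ₀ + η₀ = γ + (d - ρ) t`, `ξ₁ + η₁ = (d - ρ) s + γσ + (m + dσ) t`,
`ξ₂ + η₂ = (m + dσ) s + mσ t` and `ξ₃ + η₃ = mσ s`. Expanding the difference of products,
the two `(d - ρ) mσ s t` terms cancel and `γσ (m + dσ) s - γ mσ s = γ d σ² s`; every
remaining term is a product of the positive quantities `d - ρ`, `m + dσ`, `s`, `t`, `γ`, `σ`.
-/

theorem shifted_coeffs_det_eq {R : Type*} [CommRing R] (a m d σ γ s t : R) :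
    (a * s + γ * σ + (m + d * σ) * t) * ((m + d * σ) * s + m * σ * t)
        - (γ + a * t) * (m * σ * s)
      = a * (m + d * σ) * s ^ 2 + (m + d * σ) ^ 2 * t * s + γ * d * σ ^ 2 * s
        + (γ * σ + (m + d * σ) * t) * (m * σ * t) := by
  ring

theorem pr_key_identity_general (m d σ ρ γ τ ε : ℝ)
    (hm : 0 < m) (hd : 0 < d) (hσ : 0 < σ) (hγ : 0 < γ) (hτ : 0 < τ)
    (hdρ : ρ < d) (hε1 : ε < 1)
    (ξ₀ ξ₁ ξ₂ ξ₃ η₀ η₁ η₂ η₃ : ℝ)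
    (h0 : ξ₀ = γ - (d - ρ) * τ * ε)
    (h1 : ξ₁ = (d - ρ) * (1 - ε) + γ * σ - (m + d * σ) * τ * ε)
    (h2 : ξ₂ = (m + d * σ) * (1 - ε) - m * σ * τ * ε)
    (h3 : ξ₃ = m * σ * (1 - ε))
    (g0 : η₀ = (d - ρ) * τ)
    (g1 : η₁ = (d - ρ) + (m + d * σ) * τ)
    (g2 : η₂ = m + d * σ + m * σ * τ)
    (g3 : η₃ = m * σ) :
    (ξ₁ + η₁) * (ξ₂ + η₂) - (ξ₀ + η₀) * (ξ₃ + η₃)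
      = (d - ρ) * (m + d * σ) * (2 - ε) ^ 2
        + (m + d * σ) ^ 2 * τ * (2 - ε) * (1 - ε)
        + γ * d * σ ^ 2 * (2 - ε)
        + (γ * σ + (m + d * σ) * τ * (1 - ε)) * (m * σ * τ * (1 - ε))
    ∧ 0 ≤ (ξ₁ + η₁) * (ξ₂ + η₂) - (ξ₀ + η₀) * (ξ₃ + η₃) := by
  have e0 : ξ₀ + η₀ = γ + (d - ρ) * (τ * (1 - ε)) := by rw [h0, g0]; ring
  have e1 : ξ₁ + η₁ = (d - ρ) * (2 - ε) + γ * σ + (m + d * σ) * (τ * (1 - ε)) := by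
    rw [h1, g1]; ring
  have e2 : ξ₂ + η₂ = (m + d * σ) * (2 - ε) + m * σ * (τ * (1 - ε)) := by rw [h2, g2]; ring
  have e3 : ξ₃ + η₃ = m * σ * (2 - ε) := by rw [h3, g3]; ring
  have key : (ξ₁ + η₁) * (ξ₂ + η₂) - (ξ₀ + η₀) * (ξ₃ + η₃)
      = (d - ρ) * (m + d * σ) * (2 - ε) ^ 2
        + (m + d * σ) ^ 2 * τ * (2 - ε) * (1 - ε)
        + γ * d * σ ^ 2 * (2 - ε)
        + (γ * σ + (m + d * σ) * τ * (1 - ε)) * (m * σ * τ * (1 - ε)) := by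
    rw [e0, e1, e2, e3]
    linear_combination shifted_coeffs_det_eq (d - ρ) m d σ γ (2 - ε) (τ * (1 - ε))
  refine ⟨key, key ▸ ?_⟩
  have hdρ' : 0 < d - ρ := sub_pos.mpr hdρ
  have hs : 0 < 2 - ε := by linarith
  have ht : 0 < 1 - ε := sub_pos.mpr hε1
  positivity

theorem pr_key_identity (m d σ ρ γ τ ε : ℝ)
    (hm : 0 < m) (hd : 0 < d) (hσ : 0 < σ) (hρ : 0 < ρ) (hγ : 0 < γ) (hτ : 0 < τ)
    (hdρ : ρ < d) (hε0 : 0 < ε) (hε1 : ε < 1)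
    (ξ₀ ξ₁ ξ₂ ξ₃ η₀ η₁ η₂ η₃ : ℝ)
    (h0 : ξ₀ = γ - (d - ρ) * τ * ε)
    (h1 : ξ₁ = (d - ρ) * (1 - ε) + γ * σ - (m + d * σ) * τ * ε)
    (h2 : ξ₂ = (m + d * σ) * (1 - ε) - m * σ * τ * ε)
    (h3 : ξ₃ = m * σ * (1 - ε))
    (g0 : η₀ = (d - ρ) * τ)
    (g1 : η₁ = (d - ρ) + (m + d * σ) * τ)
    (g2 : η₂ = m + d * σ + m * σ * τ)
    (g3 : η₃ = m * σ) :
    (ξ₁ + η₁) * (ξ₂ + η₂) - (ξ₀ + η₀) * (ξ₃ + η₃)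
      = (d - ρ) * (m + d * σ) * (2 - ε) ^ 2
        + (m + d * σ) ^ 2 * τ * (2 - ε) * (1 - ε)
        + γ * d * σ ^ 2 * (2 - ε)
        + (γ * σ + (m + d * σ) * τ * (1 - ε)) * (m * σ * τ * (1 - ε))
    ∧ 0 ≤ (ξ₁ + η₁) * (ξ₂ + η₂) - (ξ₀ + η₀) * (ξ₃ + η₃) :=
  pr_key_identity_general m d σ ρ γ τ ε hm hd hσ hγ hτ hdρ hε1 ξ₀ ξ₁ ξ₂ ξ₃ η₀ η₁ η₂ η₃ h0 h1 h2 h3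
    g0 g1 g2 g3
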